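/- arXiv:2308.10815 — 3 statements merged into one kernel-verified Lean document; each statement's English description precedes it below -/
import Mathlib

section
/- Let T be an essentially small triangulated category, and equip Sp(T) (the set of thick subcategories of T) with the topology whose closed sets are generated by the basis {sup(a)}_{a ∈ T}, where sup(a) = {J : a ∉ J}. Then each sup(a) is closed in Sp(T), and (Sp(T), sup) is a support datum on T, i.e. it satisfies: sup(0) = ∅; sup(a ⊕ b) = sup(a) ∪ sup(b); sup(Σa) = sup(a); and sup(a) ⊆ sup(b) ∪ sup(c) for every distinguished triangle a → b → c → Σa. -/
open CategoryTheory CategoryTheory.Limits CategoryTheory.Pretriangulated ZeroObject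

universe v u

variable (C : Type u) [Category.{v} C] [HasZeroObject C] [HasShift C ℤ]
  [Preadditive C] [∀ n : ℤ, (shiftFunctor C n).Additive] [Pretriangulated C]
  [HasBinaryBiproducts C] [EssentiallySmall.{v} C]

/-- A thick subcategory: a (strictly full) triangulated subcategory closed under
direct summands. -/
structure ThickSubcategory : Type _ where
  P : Set C
  zero : (0 : C) ∈ P
  iso_closed : ∀ {X Y : C}, (X ≅ Y) → X ∈ P → Y ∈ P
  shift_mem : ∀ (X : C) (n : ℤ), X ∈ P → (X⟦n⟧) ∈ P
  ext₂ : ∀ (T : Triangle C) (_ : T ∈ distTriang C), T.obj₁ ∈ P → T.obj₃ ∈ P → T.obj₂ ∈ P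
  summand : ∀ (X Y : C), (X ⊞ Y) ∈ P → X ∈ P

/-- A support datum `(X, σ)` on `C`: closed subsets satisfying (SD1)–(SD4). -/
structure SupportDatum (X : Type*) [TopologicalSpace X] : Type _ where
  σ : C → Set X
  isClosed : ∀ a : C, IsClosed (σ a)
  zero : σ 0 = ∅
  sum : ∀ a b : C, σ (a ⊞ b) = σ a ∪ σ b
  shift : ∀ a : C, σ (a⟦(1 : ℤ)⟧) = σ a
  triangle : ∀ (T : Triangle C) (_ : T ∈ distTriang C), σ T.obj₁ ⊆ σ T.obj₂ ∪ σ T.obj₃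

variable {C}

/-- `sup a = {J : a ∉ J}`. -/
def sup (a : C) : Set (ThickSubcategory C) := {J | a ∉ J.P}

/-- The topology on `Sp(T)` with the `sup a` as a basis of closed subsets. -/
def spTopology : TopologicalSpace (ThickSubcategory C) :=
  TopologicalSpace.generateFrom {U | ∃ a : C, U = (sup a)ᶜ}

theorem sp_supportDatum :
    (∀ a : C, @IsClosed _ spTopology (sup a)) ∧
    sup (0 : C) = (∅ : Set (ThickSubcategory C)) ∧
    (∀ a b : C, sup (a ⊞ b) = sup a ∪ sup b) ∧
    (∀ a : C, sup (a⟦(1 : ℤ)⟧) = sup a) ∧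
    (∀ (T : Triangle C) (_ : T ∈ distTriang C), sup T.obj₁ ⊆ sup T.obj₂ ∪ sup T.obj₃) := by
  refine ⟨?_, ?_, ?_, ?_, ?_⟩
  · intro a
    letI : TopologicalSpace (ThickSubcategory C) := spTopology
    exact ⟨TopologicalSpace.GenerateOpen.basic _ ⟨a, rfl⟩⟩
  · ext J
    simp only [sup, Set.mem_setOf_eq, Set.mem_empty_iff_false, iff_false, not_not]
    exact J.zero
  · intro a b
    ext J
    simp only [sup, Set.mem_setOf_eq, Set.mem_union]
    constructor
    · intro h
      by_contra hc
      push_neg at hc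
      exact h (J.ext₂ _ (binaryBiproductTriangle_distinguished a b) hc.1 hc.2)
    · rintro (h | h) hab
      · exact h (J.summand a b hab)
      · exact h (J.summand b a (J.iso_closed (biprod.braiding a b) hab))
  · intro a
    ext J
    simp only [sup, Set.mem_setOf_eq]
    constructor
    · intro h ha
      exact h (J.shift_mem a 1 ha)
    · intro h ha
      exact h (J.iso_closed ((shiftFunctorCompIsoId C (1 : ℤ) (-1) (by ring)).app a)
        (J.shift_mem _ (-1) ha))
  · intro T hT J hJ
    by_contra hc
    simp only [sup, Set.mem_union, Set.mem_setOf_eq] at hc hJ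
    push_neg at hc
    exact hJ (J.ext₂ _ (inv_rot_of_distTriang T hT)
      (J.shift_mem _ (-1) hc.2) hc.1)
end

section
/- Let (X, σ) be a support datum on an essentially small triangulated category T. If g : X → Sp(T) is any map satisfying g⁻¹(sup(a)) = σ(a) for all objects a of T, then g(x) = {a ∈ T : x ∉ σ(a)} for every x ∈ X; in particular, there is at most one morphism of support data from (X, σ) to (Sp(T), sup). -/
open CategoryTheory CategoryTheory.Limits CategoryTheory.Pretriangulated ZeroObject

universe v u

variable (C : Type u) [Category.{v} C] [HasZeroObject C] [HasShift C ℤ]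
  [Preadditive C] [∀ n : ℤ, (shiftFunctor C n).Additive] [Pretriangulated C]
  [HasBinaryBiproducts C] [EssentiallySmall.{v} C]

variable {C}

theorem f_unique {X : Type*} [TopologicalSpace X] (S : SupportDatum C X)
    (g : X → ThickSubcategory C) (hg : ∀ a : C, g ⁻¹' (sup a) = S.σ a) (x : X) :
    (g x).P = {a : C | x ∉ S.σ a} := by
  ext a
  have := congrArg (x ∈ ·) (hg a)
  simp only [Set.mem_preimage, sup, Set.mem_setOf_eq, eq_iff_iff] at this
  rw [Set.mem_setOf_eq, ← this, not_not]
end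

section
/- Every essentially small triangulated category T admits a final support datum: namely (Sp(T), sup), where Sp(T) is the set of thick subcategories of T topologized with {sup(a)}_{a∈T} as a basis of closed subsets and sup(a) = {J : a ∉ J}; for every support datum (X, σ) there exists a unique morphism of support data (X, σ) → (Sp(T), sup). -/
open CategoryTheory CategoryTheory.Limits CategoryTheory.Pretriangulated ZeroObject

/-!
A point `x` of a support datum `(X, σ)` determines the class of objects whose support misses it,
`{a | x ∉ σ a}`; the axioms of a support datum say exactly that this class is a thick subcategory.
Sending `x` to it is a morphism of support data, since its preimage of `sup a` is `σ a` by
construction, and it is the only one, because a thick subcategory is determined by which `sup a`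
contain it.
-/

universe v u

variable (C : Type u) [Category.{v} C] [HasZeroObject C] [HasShift C ℤ]
  [Preadditive C] [∀ n : ℤ, (shiftFunctor C n).Additive] [Pretriangulated C]
  [HasBinaryBiproducts C] [EssentiallySmall.{v} C]

variable {C}

section

omit [EssentiallySmall.{v} C]

namespace ThickSubcategory

@[ext]
lemma ext {J K : ThickSubcategory C} (h : J.P = K.P) : J = K := by
  cases J; cases K; cases h; rfl

lemma funext_of_preimage_sup {X : Type*} {f g : X → ThickSubcategory C}
    (h : ∀ a : C, f ⁻¹' sup a = g ⁻¹' sup a) : f = g := by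
  funext x
  ext a
  exact not_iff_not.mp (Set.ext_iff.mp (h a) x)

lemma continuous_spTopology_iff {X : Type*} [TopologicalSpace X] {f : X → ThickSubcategory C} :
    @Continuous X (ThickSubcategory C) _ spTopology f ↔ ∀ a : C, IsClosed (f ⁻¹' sup a) := by
  rw [spTopology, continuous_generateFrom_iff]
  constructor
  · intro hf a
    exact isOpen_compl_iff.mp (hf _ ⟨a, rfl⟩)
  · rintro hf _ ⟨a, rfl⟩
    exact (hf a).isOpen_compl

end ThickSubcategory

namespace SupportDatum

variable {X : Type*} [TopologicalSpace X] (S : SupportDatum C X)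

-- `a ⟶ b ⟶ 0 ⟶ a⟦1⟧` is distinguished, being isomorphic to the contractible triangle on `a`.
lemma σ_mono_of_iso {a b : C} (e : a ≅ b) : S.σ a ⊆ S.σ b := by
  have hT : Triangle.mk (Z := (0 : C)) e.hom 0 0 ∈ distTriang C :=
    isomorphic_distinguished _ (contractible_distinguished a) _ <|
      Triangle.isoMk _ _ (Iso.refl a) e.symm (Iso.refl 0)
        (e.hom_inv_id.trans (Category.comp_id _).symm) (zero_comp.trans comp_zero.symm)
        (zero_comp.trans (Category.id_comp _).symm)
  simpa [S.zero] using S.triangle _ hT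

lemma σ_eq_of_iso {a b : C} (e : a ≅ b) : S.σ a = S.σ b :=
  (S.σ_mono_of_iso e).antisymm (S.σ_mono_of_iso e.symm)

lemma σ_shift (a : C) (n : ℤ) : S.σ (a⟦n⟧) = S.σ a := by
  have step : ∀ m : ℤ, S.σ (a⟦m + 1⟧) = S.σ (a⟦m⟧) := fun m => by
    rw [S.σ_eq_of_iso ((shiftFunctorAdd C m 1).app a)]
    exact S.shift _
  induction n using Int.induction_on with
  | zero => exact S.σ_eq_of_iso ((shiftFunctorZero C ℤ).app a)
  | succ k ih => rw [step k, ih]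
  | pred k ih => rw [← ih, ← step (-k - 1), sub_add_cancel]

-- `triangle` applied to the rotated triangle `obj₂ ⟶ obj₃ ⟶ obj₁⟦1⟧ ⟶ obj₂⟦1⟧`.
lemma σ_obj₂_subset (T : Triangle C) (hT : T ∈ distTriang C) :
    S.σ T.obj₂ ⊆ S.σ T.obj₁ ∪ S.σ T.obj₃ := by
  have h := S.triangle _ (rot_of_distTriang T hT)
  rwa [Triangle.rotate_obj₃, S.σ_shift, Set.union_comm] at h

lemma σ_subset_biprod (a b : C) : S.σ a ⊆ S.σ (a ⊞ b) := by
  rw [S.sum]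
  exact Set.subset_union_left

def thickSubcategoryAt (x : X) : ThickSubcategory C where
  P := {a | x ∉ S.σ a}
  zero := by simp [S.zero]
  iso_closed e := by simp [S.σ_eq_of_iso e]
  shift_mem a n := by simp [S.σ_shift]
  ext₂ T hT h₁ h₃ hx := (S.σ_obj₂_subset T hT hx).elim h₁ h₃
  summand a b h hx := h (S.σ_subset_biprod a b hx)

lemma preimage_thickSubcategoryAt_sup (a : C) : S.thickSubcategoryAt ⁻¹' sup a = S.σ a := by
  ext x
  simp [thickSubcategoryAt, sup]

lemma continuous_thickSubcategoryAt :
    @Continuous X (ThickSubcategory C) _ spTopology S.thickSubcategoryAt :=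
  ThickSubcategory.continuous_spTopology_iff.mpr fun a => by
    simpa [preimage_thickSubcategoryAt_sup] using S.isClosed a

end SupportDatum

end

theorem final_supportDatum {X : Type*} [TopologicalSpace X] (S : SupportDatum C X) :
    ∃! f : X → ThickSubcategory C,
      @Continuous X (ThickSubcategory C) _ spTopology f ∧ ∀ a : C, S.σ a = f ⁻¹' (sup a) := by
  refine ⟨S.thickSubcategoryAt, ⟨S.continuous_thickSubcategoryAt,
    fun a => (S.preimage_thickSubcategoryAt_sup a).symm⟩, ?_⟩
  rintro f ⟨-, hf⟩
  exact ThickSubcategory.funext_of_preimage_sup fun a => by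
    rw [← hf a, S.preimage_thickSubcategoryAt_sup]
end
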